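/- arXiv:1412.7473 — 4 statements merged into one kernel-verified Lean document; each statement's English description precedes it below -/
import Mathlib

section
/- Let M be a full integral lattice on a positive definite quadratic space (V, q) over ℚ with an isometry σ of M of odd prime order p, let V₀ be the fixed space of σ, V₁ its orthogonal complement, π_i the orthogonal projections of V onto V_i, and M_i = M ∩ V_i (i = 0,1). Then for i = 0, 1 one has the chain of inclusions p·π_i(M) ⊆ M_i ⊆ π_i(M) ⊆ M_i^#, where M_i^# = {x ∈ V_i : b(x, M_i) ⊆ ℤ} is the dual lattice of M_i inside V_i with respect to b. -/
/-- Let `M` be a full integral lattice on a positive definite quadratic space `(V, q)` over `ℚ`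
with an isometry `σ` of `M` of odd prime order `p`, let `V₀` be the fixed space of `σ`,
`V₁` its orthogonal complement (w.r.t. the polar form `b` of `q`), `π₀, π₁` the orthogonal
projections of `V` onto `V₀`, `V₁`, and `Mᵢ = M ∩ Vᵢ`.  Then for `i = 0, 1` one has the
chain of inclusions `p·πᵢ(M) ⊆ Mᵢ ⊆ πᵢ(M) ⊆ Mᵢ^#`, where
`Mᵢ^# = {x ∈ Vᵢ : b(x, Mᵢ) ⊆ ℤ}` is the dual lattice of `Mᵢ` inside `Vᵢ`. -/
theorem lattice_projection_inclusions
    (V : Type*) [AddCommGroup V] [Module ℚ V] [FiniteDimensional ℚ V]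
    (q : QuadraticForm ℚ V) (hqpos : ∀ v : V, v ≠ 0 → 0 < q v)
    (p : ℕ) (hp : p.Prime) (hodd : Odd p)
    (σ : V ≃ₗ[ℚ] V) (hσq : ∀ v : V, q (σ v) = q v) (hσp : σ ^ p = 1)
    (M : Submodule ℤ V) (hMfg : M.FG) (hMfull : Submodule.span ℚ (M : Set V) = ⊤)
    (hMint : ∀ x ∈ M, ∃ n : ℤ, q x = (n : ℚ))
    (hσM : ∀ x ∈ M, σ x ∈ M)
    (V₀ V₁ : Submodule ℚ V)
    (hV₀ : ∀ v : V, v ∈ V₀ ↔ σ v = v)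
    (hV₁ : ∀ v : V, v ∈ V₁ ↔ ∀ w ∈ V₀, QuadraticMap.polar q v w = 0)
    (π₀ π₁ : V →ₗ[ℚ] V)
    (hπ₀ : ∀ v : V, π₀ v ∈ V₀) (hπ₁ : ∀ v : V, π₁ v ∈ V₁)
    (hππ : ∀ v : V, π₀ v + π₁ v = v)
    (M₀ M₁ : Submodule ℤ V)
    (hM₀ : M₀ = M ⊓ V₀.restrictScalars ℤ) (hM₁ : M₁ = M ⊓ V₁.restrictScalars ℤ) :
    (∀ x ∈ M, (p : ℤ) • π₀ x ∈ M₀) ∧ (∀ x ∈ M, (p : ℤ) • π₁ x ∈ M₁) ∧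
    M₀ ≤ Submodule.map (π₀.restrictScalars ℤ) M ∧
    M₁ ≤ Submodule.map (π₁.restrictScalars ℤ) M ∧
    (∀ x ∈ M, π₀ x ∈ V₀ ∧ ∀ y ∈ M₀, ∃ n : ℤ, QuadraticMap.polar q (π₀ x) y = (n : ℚ)) ∧
    (∀ x ∈ M, π₁ x ∈ V₁ ∧ ∀ y ∈ M₁, ∃ n : ℤ, QuadraticMap.polar q (π₁ x) y = (n : ℚ)) := by

  classical
  have hz : ∀ v : V, (p : ℤ) • v = (p : ℚ) • v := by
    intro v
    rw [← Int.cast_smul_eq_zsmul ℚ]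
    norm_num
  have h01 : ∀ v : V, v ∈ V₀ → v ∈ V₁ → v = 0 := by
    intro v h0 h1
    by_contra hv
    have hpol := (hV₁ v).mp h1 v h0
    rw [QuadraticMap.polar_self, two_smul] at hpol
    have hq := hqpos v hv
    linarith
  have hσfix : ∀ w ∈ V₀, σ w = w := fun w hw => (hV₀ w).mp hw
  have hσpolar : ∀ u w : V, QuadraticMap.polar q (σ u) (σ w) = QuadraticMap.polar q u w := by
    intro u w
    simp [QuadraticMap.polar, ← map_add, hσq]
  have hpow : ∀ (j : ℕ), ∀ x ∈ M, (σ ^ j) x ∈ M := by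
    intro j
    induction j with
    | zero => intro x hx; simpa using hx
    | succ n ih =>
      intro x hx
      have h : (σ ^ (n + 1)) x = (σ ^ n) (σ x) := by rw [pow_succ]; rfl
      rw [h]
      exact ih _ (hσM x hx)
  have hpowpolar : ∀ (j : ℕ) (x w : V), w ∈ V₀ →
      QuadraticMap.polar q ((σ ^ j) x) w = QuadraticMap.polar q x w := by
    intro j
    induction j with
    | zero => intro x w hw; simp
    | succ n ih =>
      intro x w hw
      have h : (σ ^ (n + 1)) x = (σ ^ n) (σ x) := by rw [pow_succ]; rfl
      rw [h, ih (σ x) w hw]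
      have := hσpolar x w
      rwa [hσfix w hw] at this
  have hbint : ∀ x ∈ M, ∀ y ∈ M, ∃ n : ℤ, QuadraticMap.polar q x y = (n : ℚ) := by
    intro x hx y hy
    obtain ⟨a, ha⟩ := hMint (x + y) (add_mem hx hy)
    obtain ⟨b, hb⟩ := hMint x hx
    obtain ⟨c, hc⟩ := hMint y hy
    exact ⟨a - b - c, by rw [QuadraticMap.polar, ha, hb, hc]; push_cast; ring⟩
  have key : ∀ x ∈ M, ((p : ℚ) • π₀ x ∈ M ∧ (p : ℚ) • π₀ x ∈ V₀) ∧
      ((p : ℚ) • π₁ x ∈ M ∧ (p : ℚ) • π₁ x ∈ V₁) := by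
    intro x hx
    set s : V := ∑ j ∈ Finset.range p, (σ ^ j) x with hs
    have hsM : s ∈ M := Submodule.sum_mem _ fun j _ => hpow j x hx
    have hfp : (σ ^ p) x = x := by rw [hσp]; rfl
    have hσs : σ s = s := by
      rw [hs, map_sum]
      have h1 : ∀ j, σ ((σ ^ j) x) = (σ ^ (j + 1)) x := by
        intro j; rw [pow_succ']; rfl
      simp only [h1]
      have h00 : (σ ^ 0) x = x := by simp
      have h4 : (∑ j ∈ Finset.range p, (σ ^ (j + 1)) x) + (σ ^ 0) x =
          (∑ j ∈ Finset.range p, (σ ^ j) x) + (σ ^ p) x := by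
        rw [← Finset.sum_range_succ' (fun j => (σ ^ j) x) p,
          Finset.sum_range_succ (fun j => (σ ^ j) x) p]
      rw [h00, hfp] at h4
      exact add_right_cancel h4
    have hsV₀ : s ∈ V₀ := (hV₀ s).mpr hσs
    have hx1 : (p : ℚ) • x - s ∈ V₁ := by
      rw [hV₁]
      intro w hw
      have hL : ∀ u : V, ((QuadraticMap.polarBilin q).flip w) u = QuadraticMap.polar q u w :=
        fun u => rfl
      have hcalc : QuadraticMap.polar q ((p : ℚ) • x - s) w =
          (p : ℚ) * QuadraticMap.polar q x w -
            ∑ j ∈ Finset.range p, QuadraticMap.polar q ((σ ^ j) x) w := by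
        rw [← hL, hs, map_sub, map_smul, map_sum]
        simp only [hL, smul_eq_mul]
      rw [hcalc, Finset.sum_congr rfl (fun j _ => hpowpolar j x w hw), Finset.sum_const,
        Finset.card_range, nsmul_eq_mul]
      ring
    have h0 : (p : ℚ) • π₀ x - s ∈ V₀ :=
      sub_mem (Submodule.smul_mem _ _ (hπ₀ x)) hsV₀
    have hsum : (p : ℚ) • π₀ x + (p : ℚ) • π₁ x = (p : ℚ) • x := by
      rw [← smul_add, hππ]
    have hrw : (p : ℚ) • π₀ x - s = ((p : ℚ) • x - s) - (p : ℚ) • π₁ x := by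
      rw [← hsum]; abel
    have h1 : (p : ℚ) • π₀ x - s ∈ V₁ := by
      rw [hrw]
      exact sub_mem hx1 (Submodule.smul_mem _ _ (hπ₁ x))
    have heq0 : (p : ℚ) • π₀ x = s := sub_eq_zero.mp (h01 _ h0 h1)
    have heq1 : (p : ℚ) • π₁ x = (p : ℚ) • x - s := by
      rw [← heq0, eq_sub_iff_add_eq, add_comm]
      exact hsum
    have hpxM : (p : ℚ) • x ∈ M := by
      have h2 : ((p : ℤ) : ℚ) • x ∈ M := by
        rw [Int.cast_smul_eq_zsmul]
        exact Submodule.smul_mem M _ hx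
      simpa using h2
    exact ⟨⟨heq0 ▸ hsM, heq0 ▸ hsV₀⟩, ⟨heq1 ▸ sub_mem hpxM hsM, heq1 ▸ hx1⟩⟩
  -- π fixes elements of the respective subspaces
  have hfix0 : ∀ y ∈ V₀, π₀ y = y := by
    intro y hy
    have h1 : π₁ y = y - π₀ y := by rw [eq_sub_iff_add_eq, add_comm, hππ]
    have h0' : π₁ y ∈ V₀ := by rw [h1]; exact sub_mem hy (hπ₀ y)
    have := h01 _ h0' (hπ₁ y)
    rw [h1, sub_eq_zero] at this
    exact this.symm
  have hfix1 : ∀ y ∈ V₁, π₁ y = y := by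
    intro y hy
    have h1 : π₀ y = y - π₁ y := by rw [eq_sub_iff_add_eq, hππ]
    have h0' : π₀ y ∈ V₁ := by rw [h1]; exact sub_mem hy (hπ₁ y)
    have := h01 _ (hπ₀ y) h0'
    rw [h1, sub_eq_zero] at this
    exact this.symm
  refine ⟨?_, ?_, ?_, ?_, ?_, ?_⟩
  · intro x hx
    obtain ⟨⟨hm, hv⟩, _⟩ := key x hx
    rw [hM₀, Submodule.mem_inf, hz]
    exact ⟨hm, hv⟩
  · intro x hx
    obtain ⟨_, hm, hv⟩ := key x hx
    rw [hM₁, Submodule.mem_inf, hz]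
    exact ⟨hm, hv⟩
  · intro y hy
    rw [hM₀, Submodule.mem_inf] at hy
    exact ⟨y, hy.1, hfix0 y hy.2⟩
  · intro y hy
    rw [hM₁, Submodule.mem_inf] at hy
    exact ⟨y, hy.1, hfix1 y hy.2⟩
  · intro x hx
    refine ⟨hπ₀ x, ?_⟩
    intro y hy
    rw [hM₀, Submodule.mem_inf] at hy
    have hper : QuadraticMap.polar q (π₁ x) y = 0 := (hV₁ (π₁ x)).mp (hπ₁ x) y hy.2
    have hx0 : π₀ x = x - π₁ x := by rw [eq_sub_iff_add_eq, hππ]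
    obtain ⟨n, hn⟩ := hbint x hx y hy.1
    exact ⟨n, by rw [hx0, QuadraticMap.polar_sub_left, hper, hn, sub_zero]⟩
  · intro x hx
    refine ⟨hπ₁ x, ?_⟩
    intro y hy
    rw [hM₁, Submodule.mem_inf] at hy
    have hper : QuadraticMap.polar q (π₀ x) y = 0 := by
      rw [QuadraticMap.polar_comm]
      exact (hV₁ y).mp hy.2 (π₀ x) (hπ₀ x)
    have hx1' : π₁ x = x - π₀ x := by rw [eq_sub_iff_add_eq, add_comm, hππ]
    obtain ⟨n, hn⟩ := hbint x hx y hy.1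
    exact ⟨n, by rw [hx1', QuadraticMap.polar_sub_left, hper, hn, sub_zero]⟩
end

section
/- Let M be a full integral lattice on a positive definite quadratic space (V, q) over ℚ with an isometry σ of M of odd prime order p, let V₀ be the fixed space of σ (assumed nonzero), V₁ its orthogonal complement, and M_i = M ∩ V_i. Then either M = M₀ ⊕ M₁ (an orthogonal splitting), or the determinant of M₀ (the determinant of the Gram matrix (b(x_i,x_j)) of any ℤ-basis of M₀) is divisible by p. -/
/-!
The orbit sum `T = ∑_{i<p} σⁱ` maps `M` into `M₀` and satisfies `b(T x, w) = p · b(x, w)` for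
`w ∈ V₀`. If `p⁻¹ T` maps `M` into `M₀`, then `x = p⁻¹ T x + (x - p⁻¹ T x)` splits `M` as
`M₀ ⊕ M₁`. Otherwise some `y = T x ∈ M₀ ∖ p M₀` has `b(y, M₀) ⊆ pℤ`, so the coordinates of `y`
form a nonzero vector in the left kernel of the Gram matrix of `M₀` reduced mod `p`.
-/

open Finset QuadraticMap
open scoped Matrix

theorem mul_geom_sum_eq_of_pow_eq_one {R : Type*} [Ring R] {x : R} {n : ℕ} (h : x ^ n = 1) :
    x * ∑ i ∈ range n, x ^ i = ∑ i ∈ range n, x ^ i := by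
  have h' := mul_geom_sum x n
  rwa [h, sub_self, sub_mul, one_mul, sub_eq_zero] at h'

theorem Module.End.isFixedPt_geom_sum_apply {R V : Type*} [Ring R] [AddCommGroup V]
    [Module R V] {f : Module.End R V} {n : ℕ} (h : f ^ n = 1) (x : V) :
    Function.IsFixedPt f ((∑ i ∈ range n, f ^ i) x) :=
  LinearMap.congr_fun (mul_geom_sum_eq_of_pow_eq_one h) x

theorem QuadraticMap.exists_polar_eq_intCast {V S : Type*} [AddCommGroup V] [Ring S]
    {f : V → S} {M : Submodule ℤ V} (hf : ∀ x ∈ M, ∃ n : ℤ, f x = n) {x y : V} (hx : x ∈ M)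
    (hy : y ∈ M) : ∃ n : ℤ, polar f x y = n := by
  obtain ⟨a, ha⟩ := hf (x + y) (M.add_mem hx hy)
  obtain ⟨b, hb⟩ := hf x hx
  obtain ⟨c, hc⟩ := hf y hy
  exact ⟨a - b - c, by simp [polar, ha, hb, hc]⟩

namespace LinearMap.BilinForm

variable {R V : Type*} [CommRing R] [AddCommGroup V] [Module R V]
  {B : LinearMap.BilinForm R V} {f : Module.End R V} {w : V}

theorem apply_pow_apply_of_isFixedPt (hf : ∀ x y, B (f x) (f y) = B x y)
    (hw : Function.IsFixedPt f w) (i : ℕ) (x : V) : B ((f ^ i) x) w = B x w := by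
  induction i with
  | zero => rfl
  | succ i ih =>
    have h := hf ((f ^ i) x) w
    rw [hw.eq] at h
    rw [pow_succ', Module.End.mul_apply, h, ih]

theorem apply_geom_sum_apply_of_isFixedPt (hf : ∀ x y, B (f x) (f y) = B x y)
    (hw : Function.IsFixedPt f w) (n : ℕ) (x : V) :
    B ((∑ i ∈ Finset.range n, f ^ i) x) w = n * B x w := by
  simp only [map_sum, LinearMap.sum_apply, apply_pow_apply_of_isFixedPt hf hw,
    sum_const, card_range, nsmul_eq_mul]

theorem sub_inv_smul_apply_eq_zero {K V : Type*} [Field K] [AddCommGroup V] [Module K V]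
    (B : LinearMap.BilinForm K V) {c : K} (hc : c ≠ 0) {x y w : V} (h : B y w = c * B x w) :
    B (x - c⁻¹ • y) w = 0 := by
  rw [map_sub, map_smul, LinearMap.sub_apply, LinearMap.smul_apply, h, smul_eq_mul,
    inv_mul_cancel_left₀ hc, sub_self]

end LinearMap.BilinForm

theorem Submodule.eq_inf_sup_inf_of_forall_sub_mem {R V : Type*} [Ring R] [AddCommGroup V]
    [Module R V] {M N₀ N₁ : Submodule R V} (P : V → V) (hP₀ : ∀ x ∈ M, P x ∈ M ⊓ N₀)
    (hP₁ : ∀ x ∈ M, x - P x ∈ N₁) : M = M ⊓ N₀ ⊔ M ⊓ N₁ := by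
  refine le_antisymm (fun x hx => ?_) (sup_le inf_le_left inf_le_left)
  have hx₁ : x - P x ∈ M ⊓ N₁ := ⟨M.sub_mem hx (hP₀ x hx).1, hP₁ x hx⟩
  simpa using add_mem_sup (hP₀ x hx) hx₁

theorem Module.Basis.exists_eq_smul_of_forall_dvd_repr {ι R M : Type*} [Fintype ι] [CommRing R]
    [AddCommGroup M] [Module R M] (b : Basis ι R M) {d : R} {y : M}
    (h : ∀ i, d ∣ b.repr y i) : ∃ z, y = d • z := by
  choose c hc using h
  refine ⟨∑ i, c i • b i, ?_⟩
  conv_lhs => rw [← b.sum_repr y]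
  simp only [smul_sum, smul_smul, hc]

theorem Module.Basis.exists_not_dvd_repr_of_inv_smul_notMem {V ι : Type*} [AddCommGroup V]
    [Module ℚ V] [Fintype ι] {L : Submodule ℤ V} (b : Basis ι ℤ L) {d : ℤ} (hd : d ≠ 0) (y : L)
    (hy : (d : ℚ)⁻¹ • (y : V) ∉ L) : ∃ i, ¬ d ∣ b.repr y i := by
  by_contra! h
  obtain ⟨z, rfl⟩ := b.exists_eq_smul_of_forall_dvd_repr h
  apply hy
  rw [Submodule.coe_smul, ← Int.cast_smul_eq_zsmul ℚ, inv_smul_smul₀ (Int.cast_ne_zero.mpr hd)]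
  exact z.2

theorem Matrix.det_mem_of_vecMul_mem {R ι : Type*} [CommRing R] [Fintype ι] [DecidableEq ι]
    {I : Ideal R} [I.IsPrime] (A : Matrix ι ι R) {v : ι → R} (hv : ∃ i, v i ∉ I)
    (hvA : ∀ j, (v ᵥ* A) j ∈ I) : A.det ∈ I := by
  rw [← Ideal.Quotient.eq_zero_iff_mem, RingHom.map_det, ← Matrix.exists_vecMul_eq_zero_iff]
  refine ⟨fun i => Ideal.Quotient.mk I (v i), fun h => ?_, ?_⟩
  · obtain ⟨i, hi⟩ := hv
    exact hi (Ideal.Quotient.eq_zero_iff_mem.mp (congrFun h i))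
  · ext j
    simpa [Matrix.vecMul, dotProduct, ← map_mul, ← map_sum, Ideal.Quotient.eq_zero_iff_mem]
      using hvA j

theorem LinearMap.BilinForm.exists_det_gram_eq_mul_of_inv_smul_notMem {V ι : Type*}
    [AddCommGroup V] [Module ℚ V] [Fintype ι] [DecidableEq ι] (B : LinearMap.BilinForm ℚ V)
    {L : Submodule ℤ V} (b : Module.Basis ι ℤ L) {p : ℕ} (hp : p.Prime)
    (hgram : ∀ i j, ∃ n : ℤ, B (b i) (b j) = n) {y : V} (hy : y ∈ L)
    (hyp : (p : ℚ)⁻¹ • y ∉ L) (hyB : ∀ j, ∃ t : ℤ, B y (b j) = p * t) :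
    ∃ k : ℤ, (Matrix.of fun i j => B (b i) (b j)).det = p * k := by
  choose g hg using hgram
  set n := b.repr ⟨y, hy⟩
  have hcoord : ∀ j, ((n ᵥ* Matrix.of g) j : ℚ) = B y (b j) := by
    intro j
    have hy' : y = ∑ i, n i • (b i : V) := by
      have h := congrArg Subtype.val (b.sum_repr ⟨y, hy⟩)
      rw [Submodule.coe_sum] at h
      exact h.symm
    simp [hy', Matrix.vecMul, dotProduct, hg]
  have hn : ∃ i, n i ∉ Ideal.span {(p : ℤ)} := by
    simpa only [Ideal.mem_span_singleton] using
      b.exists_not_dvd_repr_of_inv_smul_notMem (d := p) (by exact_mod_cast hp.ne_zero) ⟨y, hy⟩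
        (by simpa only [Int.cast_natCast] using hyp)
  have hnA : ∀ j, (n ᵥ* Matrix.of g) j ∈ Ideal.span {(p : ℤ)} := by
    intro j
    obtain ⟨t, ht⟩ := hyB j
    rw [Ideal.mem_span_singleton]
    exact ⟨t, by exact_mod_cast (hcoord j).trans ht⟩
  have : (Ideal.span {(p : ℤ)}).IsPrime :=
    (Ideal.span_singleton_prime (by exact_mod_cast hp.ne_zero)).mpr (Nat.prime_iff_prime_int.mp hp)
  obtain ⟨k, hk⟩ := Ideal.mem_span_singleton.mp (Matrix.det_mem_of_vecMul_mem _ hn hnA)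
  refine ⟨k, ?_⟩
  have hG : (Matrix.of fun i j => B (b i) (b j)) = (Matrix.of g).map ((↑) : ℤ → ℚ) := by
    ext i j
    simp [hg]
  rw [hG, ← Int.cast_det, hk]
  push_cast
  rfl

theorem splitting_or_fixed_lattice_det_divisible_general
    (V : Type*) [AddCommGroup V] [Module ℚ V]
    (q : QuadraticForm ℚ V)
    (p : ℕ) (hp : p.Prime)
    (σ : V ≃ₗ[ℚ] V) (hσq : ∀ v : V, q (σ v) = q v) (hσp : σ ^ p = 1)
    (M : Submodule ℤ V)
    (hMint : ∀ x ∈ M, ∃ n : ℤ, q x = (n : ℚ))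
    (hσM : ∀ x ∈ M, σ x ∈ M)
    (V₀ V₁ : Submodule ℚ V)
    (hV₀ : ∀ v : V, v ∈ V₀ ↔ σ v = v)
    (hV₁ : ∀ v : V, v ∈ V₁ ↔ ∀ w ∈ V₀, QuadraticMap.polar q v w = 0)
    (M₀ M₁ : Submodule ℤ V)
    (hM₀ : M₀ = M ⊓ V₀.restrictScalars ℤ) (hM₁ : M₁ = M ⊓ V₁.restrictScalars ℤ)
    (m₀ : ℕ) (b₀ : Module.Basis (Fin m₀) ℤ M₀) :
    M = M₀ ⊔ M₁ ∨
      ∃ k : ℤ, (Matrix.of fun i j =>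
          QuadraticMap.polar q (b₀ i : V) (b₀ j : V)).det = (p : ℚ) * (k : ℚ) := by
  subst hM₀ hM₁
  set B : LinearMap.BilinForm ℚ V := polarBilin q
  set f : Module.End ℚ V := σ.toLinearMap
  set T := ∑ i ∈ range p, f ^ i
  have hfB : ∀ x y, B (f x) (f y) = B x y := fun x y => by
    simp [B, f, polar, ← map_add, hσq]
  have hfp : f ^ p = 1 := by
    ext v
    simp [f, Module.End.pow_apply, ← LinearEquiv.pow_apply, hσp]
  have hTV₀ : ∀ x, T x ∈ V₀ := fun x => (hV₀ _).2 (Module.End.isFixedPt_geom_sum_apply hfp x)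
  have hTB : ∀ x, ∀ w ∈ V₀, B (T x) w = p * B x w := fun x w hw =>
    B.apply_geom_sum_apply_of_isFixedPt hfB ((hV₀ w).1 hw) p x
  have hTM : ∀ x ∈ M, T x ∈ M := fun x hx => by
    rw [LinearMap.sum_apply]
    exact sum_mem fun i _ => Module.End.pow_apply f i x ▸ Set.MapsTo.iterate (f := f) hσM i hx
  have hBM : ∀ x ∈ M, ∀ y ∈ M, ∃ n : ℤ, B x y = n := fun x hx y hy =>
    exists_polar_eq_intCast hMint hx hy
  have hp₀ : (p : ℚ) ≠ 0 := by exact_mod_cast hp.ne_zero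
  by_cases hsplit : ∀ x ∈ M, (p : ℚ)⁻¹ • T x ∈ M ⊓ V₀.restrictScalars ℤ
  · exact .inl <| M.eq_inf_sup_inf_of_forall_sub_mem _ hsplit fun x _ =>
      (hV₁ _).2 fun w hw => B.sub_inv_smul_apply_eq_zero hp₀ (hTB x w hw)
  · push Not at hsplit
    obtain ⟨x, hx, hxp⟩ := hsplit
    have hb₀M : ∀ i, (b₀ i : V) ∈ M := fun i => (b₀ i).2.1
    refine .inr <| B.exists_det_gram_eq_mul_of_inv_smul_notMem b₀ hp
      (fun i j => hBM _ (hb₀M i) _ (hb₀M j)) ⟨hTM x hx, hTV₀ x⟩ hxp fun j => ?_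
    obtain ⟨t, ht⟩ := hBM x hx _ (hb₀M j)
    exact ⟨t, by rw [hTB x _ (b₀ j).2.2, ht]⟩

/-- Let `M` be a full integral lattice on a positive definite quadratic space `(V, q)` over `ℚ`
with an isometry `σ` of `M` of odd prime order `p`, let `V₀ ≠ 0` be the fixed space of `σ`,
`V₁` its orthogonal complement (w.r.t. the polar form `b` of `q`), and `Mᵢ = M ∩ Vᵢ`.
Then either `M = M₀ ⊕ M₁` (an orthogonal splitting), or the determinant of `M₀` (the
determinant of the Gram matrix `(b (xᵢ) (xⱼ))` of any `ℤ`-basis of `M₀`) is divisible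
by `p`. -/
theorem splitting_or_fixed_lattice_det_divisible
    (V : Type*) [AddCommGroup V] [Module ℚ V] [FiniteDimensional ℚ V]
    (q : QuadraticForm ℚ V) (hqpos : ∀ v : V, v ≠ 0 → 0 < q v)
    (p : ℕ) (hp : p.Prime) (hodd : Odd p)
    (σ : V ≃ₗ[ℚ] V) (hσq : ∀ v : V, q (σ v) = q v) (hσp : σ ^ p = 1)
    (M : Submodule ℤ V) (hMfg : M.FG) (hMfull : Submodule.span ℚ (M : Set V) = ⊤)
    (hMint : ∀ x ∈ M, ∃ n : ℤ, q x = (n : ℚ))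
    (hσM : ∀ x ∈ M, σ x ∈ M)
    (V₀ V₁ : Submodule ℚ V) (hV₀ne : V₀ ≠ ⊥)
    (hV₀ : ∀ v : V, v ∈ V₀ ↔ σ v = v)
    (hV₁ : ∀ v : V, v ∈ V₁ ↔ ∀ w ∈ V₀, QuadraticMap.polar q v w = 0)
    (M₀ M₁ : Submodule ℤ V)
    (hM₀ : M₀ = M ⊓ V₀.restrictScalars ℤ) (hM₁ : M₁ = M ⊓ V₁.restrictScalars ℤ)
    (m₀ : ℕ) (b₀ : Module.Basis (Fin m₀) ℤ M₀) :
    M = M₀ ⊔ M₁ ∨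
      ∃ k : ℤ, (Matrix.of fun i j =>
          QuadraticMap.polar q (b₀ i : V) (b₀ j : V)).det = (p : ℚ) * (k : ℚ) :=
  splitting_or_fixed_lattice_det_divisible_general V q p hp σ hσq hσp M hMint hσM V₀ V₁ hV₀ hV₁ M₀
    M₁ hM₀ hM₁ m₀ b₀
end

section
/- Let M be a full positive definite integral lattice on a quadratic space (V, q) over ℚ with an automorphism σ of prime order p ≠ 2, let V₀ be the fixed space of σ and m₀ = dim V₀. Then for every integer n > m₀ and every positive definite symmetric n × n integer matrix S, the representation number A(M,S) = #{(x₁,…,x_n) ∈ M^n : b(x_i,x_j) = S_{ij}} is divisible by p. (The degree-n theta series of M for n > m₀ is singular modulo p.) -/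
/-!
Let `σ` act componentwise on the set of representations of `S` by `M`. This is an action of a
group of order `p`, so every orbit has size `1` or `p`, and the number of representations is
congruent modulo `p` to the number of fixed ones (if there are infinitely many, `Nat.card` is `0`).
A fixed representation lies in `V₀ⁿ`; but a family whose Gram matrix is positive definite is
linearly independent, so it cannot lie in a space of dimension `m₀ < n`.
-/

open Set Matrix

theorem Nat.Prime.dvd_natCard_of_iterate_eq_id {α : Type*} {p : ℕ} (hp : p.Prime) {f : α → α}
    (hf : f^[p] = id) (hfix : ∀ x, f x ≠ x) : p ∣ Nat.card α := by
  classical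
  rcases finite_or_infinite α with _ | _
  · have := Fintype.ofFinite α
    have : Fact p.Prime := ⟨hp⟩
    have : IsEmpty (Function.fixedPoints f) := ⟨fun x => hfix x.1 x.2⟩
    have hmod := Equiv.Perm.card_fixedPoints_modEq (f := (f : Function.End α)) (n := 1)
      (by rw [pow_one]; exact hf)
    simpa [Nat.card_eq_fintype_card, Nat.modEq_zero_iff_dvd] using hmod
  · simp

theorem LinearMap.BilinForm.linearIndependent_of_posDef {K V ι : Type*} [CommRing K]
    [PartialOrder K] [StarRing K] [AddCommGroup V] [Module K V] [Fintype ι]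
    (B : LinearMap.BilinForm K V) {x : ι → V} {A : Matrix ι ι K}
    (hB : ∀ i j, B (x i) (x j) = A i j) (hA : A.PosDef) : LinearIndependent K x := by
  refine Fintype.linearIndependent_iff.2 fun c hc => ?_
  by_contra! ⟨i₀, hi₀⟩
  have hAc : A *ᵥ c = 0 := by
    ext i
    simpa [mulVec, dotProduct, ← hB, hc, mul_comm] using
      (map_sum (B (x i)) (fun j => c j • x j) Finset.univ).symm
  have hpos := hA.dotProduct_mulVec_pos (x := c) fun h => hi₀ (congrFun h i₀)
  simp [hAc] at hpos

theorem LinearIndependent.card_le_finrank_of_forall_mem {K V ι : Type*} [DivisionRing K]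
    [AddCommGroup V] [Module K V] [Fintype ι] {x : ι → V} (hx : LinearIndependent K x)
    {W : Submodule K V} [FiniteDimensional K W] (hxW : ∀ i, x i ∈ W) :
    Fintype.card ι ≤ Module.finrank K W :=
  (finrank_span_eq_card hx).symm.le.trans
    (Submodule.finrank_mono (Submodule.span_le.2 (range_subset_iff.2 hxW)))

section Representations

variable {ι V R : Type*} [CommRing R] [AddCommGroup V] [Module R V]

def QuadraticMap.representations (q : QuadraticForm R V) (M : Submodule ℤ V)
    (S : Matrix ι ι ℤ) : Set (ι → V) :=
  {x | (∀ i, x i ∈ M) ∧ ∀ i j, QuadraticMap.polar q (x i) (x j) = (S i j : R)}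

theorem QuadraticMap.mapsTo_comp_representations {q : QuadraticForm R V} {M : Submodule ℤ V}
    (S : Matrix ι ι ℤ) {σ : V →ₗ[R] V} (hσq : ∀ v, q (σ v) = q v) (hσM : ∀ x ∈ M, σ x ∈ M) :
    MapsTo (fun x => σ ∘ x) (q.representations M S) (q.representations M S) := by
  rintro x ⟨hxM, hxS⟩
  refine ⟨fun i => hσM _ (hxM i), fun i j => ?_⟩
  simp only [Function.comp_apply, QuadraticMap.polar, ← map_add, hσq, ← hxS i j]

end Representations

theorem theta_series_singular_mod_p_above_fixed_rank_general
    (V : Type*) [AddCommGroup V] [Module ℚ V] [FiniteDimensional ℚ V]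
    (q : QuadraticForm ℚ V)
    (p : ℕ) (hp : p.Prime)
    (σ : V ≃ₗ[ℚ] V) (hσq : ∀ v : V, q (σ v) = q v) (hσp : σ ^ p = 1)
    (M : Submodule ℤ V)
    (hσM : ∀ x ∈ M, σ x ∈ M)
    (V₀ : Submodule ℚ V) (hV₀ : ∀ v : V, v ∈ V₀ ↔ σ v = v)
    (m₀ : ℕ) (hm₀ : m₀ = Module.finrank ℚ V₀)
    (n : ℕ) (hn : n > m₀)
    (S : Matrix (Fin n) (Fin n) ℤ)
    (hSpos : (S.map ((↑) : ℤ → ℚ)).PosDef) :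
    p ∣ Nat.card {x : Fin n → V // (∀ i, x i ∈ M) ∧
        ∀ i j, QuadraticMap.polar q (x i) (x j) = (S i j : ℚ)} := by
  change p ∣ Nat.card (q.representations M S)
  have hmaps : MapsTo (σ • ·) (q.representations M S) (q.representations M S) :=
    QuadraticMap.mapsTo_comp_representations S (σ := σ.toLinearMap) hσq hσM
  refine hp.dvd_natCard_of_iterate_eq_id (f := hmaps.restrict) ?_ ?_
  · funext x
    apply Subtype.ext
    rw [hmaps.coe_iterate_restrict, smul_iterate_apply, hσp, one_smul, id]
  · rintro ⟨x, _, hxS⟩ hfix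
    have hx : LinearIndependent ℚ x :=
      LinearMap.BilinForm.linearIndependent_of_posDef (QuadraticMap.polarBilin q) hxS hSpos
    have hxV₀ : ∀ i, x i ∈ V₀ := fun i => (hV₀ _).2 (congrFun (congrArg Subtype.val hfix) i)
    have hcard : n ≤ Module.finrank ℚ V₀ := by
      simpa using hx.card_le_finrank_of_forall_mem hxV₀
    omega

/-- Let `M` be a full positive definite integral lattice on a quadratic space `(V, q)` over `ℚ`
with an automorphism `σ` of prime order `p ≠ 2`, let `V₀` be the fixed space of `σ` and
`m₀ = dim V₀`.  Then for every integer `n > m₀` and every positive definite symmetric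
`n × n` integer matrix `S`, the representation number
`A(M, S) = #{(x₁, …, x_n) ∈ M^n : b (xᵢ) (xⱼ) = Sᵢⱼ}` is divisible by `p`
(with `b = QuadraticMap.polar q`); i.e. the degree-`n` theta series of `M` for `n > m₀`
is singular modulo `p`. -/
theorem theta_series_singular_mod_p_above_fixed_rank
    (V : Type*) [AddCommGroup V] [Module ℚ V] [FiniteDimensional ℚ V]
    (q : QuadraticForm ℚ V) (hqpos : ∀ v : V, v ≠ 0 → 0 < q v)
    (p : ℕ) (hp : p.Prime) (hodd : Odd p)
    (σ : V ≃ₗ[ℚ] V) (hσq : ∀ v : V, q (σ v) = q v) (hσp : σ ^ p = 1)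
    (M : Submodule ℤ V) (hMfg : M.FG) (hMfull : Submodule.span ℚ (M : Set V) = ⊤)
    (hMint : ∀ x ∈ M, ∃ n : ℤ, q x = (n : ℚ))
    (hσM : ∀ x ∈ M, σ x ∈ M)
    (V₀ : Submodule ℚ V) (hV₀ : ∀ v : V, v ∈ V₀ ↔ σ v = v)
    (m₀ : ℕ) (hm₀ : m₀ = Module.finrank ℚ V₀)
    (n : ℕ) (hn : n > m₀)
    (S : Matrix (Fin n) (Fin n) ℤ) (hSsymm : S.IsSymm)
    (hSpos : (S.map ((↑) : ℤ → ℚ)).PosDef) :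
    p ∣ Nat.card {x : Fin n → V // (∀ i, x i ∈ M) ∧
        ∀ i j, QuadraticMap.polar q (x i) (x j) = (S i j : ℚ)} :=
  theta_series_singular_mod_p_above_fixed_rank_general V q p hp σ hσq hσp M hσM V₀ hV₀ m₀ hm₀ n hn S
    hSpos
end

section
/- Let p be an odd prime and ζ_p a primitive p-th root of unity. For every a ∈ ℤ and every β in the ring of integers ℤ[ζ_p] of ℚ(ζ_p), there exists a polynomial f ∈ ℤ[X] such that f(1) = p·a and f(ζ_p) = (1 − ζ_p)·β. In other words, the ideal I = pℤ ⊕ (1 − ζ_p)ℤ[ζ_p] of Γ = ℤ ⊕ ℤ[ζ_p] is contained in the image of the ring homomorphism ι : ℤ[X]/(X^p − 1) → Γ determined by X ↦ (1, ζ_p). -/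
/-- Let `p` be an odd prime and `ζ` a primitive `p`-th root of unity (in a field of
characteristic zero).  For every `a ∈ ℤ` and every `β` in the ring of integers
`ℤ[ζ] = Algebra.adjoin ℤ {ζ}` of `ℚ(ζ)`, there exists a polynomial `f ∈ ℤ[X]` such that
`f 1 = p * a` and `f ζ = (1 - ζ) * β`.  In other words, the ideal
`I = pℤ ⊕ (1 - ζ)ℤ[ζ]` of `Γ = ℤ ⊕ ℤ[ζ]` is contained in the image of the ring
homomorphism `ι : ℤ[X]/(X^p - 1) → Γ` determined by `X ↦ (1, ζ)`. -/
theorem ideal_I_contained_in_image_of_group_ring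
    (p : ℕ) (hp : p.Prime) (hodd : Odd p)
    (K : Type*) [Field K] [CharZero K]
    (ζ : K) (hζ : IsPrimitiveRoot ζ p)
    (a : ℤ) (β : K) (hβ : β ∈ Algebra.adjoin ℤ ({ζ} : Set K)) :
    ∃ f : Polynomial ℤ,
      f.eval 1 = (p : ℤ) * a ∧ Polynomial.aeval ζ f = (1 - ζ) * β := by
  rw [Algebra.adjoin_singleton_eq_range_aeval] at hβ
  obtain ⟨g, hg⟩ := hβ
  refine ⟨(1 - Polynomial.X) * g + Polynomial.C a * ∑ i ∈ Finset.range p, Polynomial.X ^ i,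
    ?_, ?_⟩
  · simp [Polynomial.eval_finset_sum, mul_comm]
  · have hsum : (∑ i ∈ Finset.range p, ζ ^ i) = 0 := hζ.geom_sum_eq_zero hp.one_lt
    simp [Polynomial.map_sum, hsum]
    exact Or.inl hg
end
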